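/- arXiv:1707.03163 — 3 statements merged into one kernel-verified Lean document; each statement's English description precedes it below -/
import Mathlib

section
/- (Integrability consequence of condition (C), Remark 1.3(1).) Let c : (0,∞) → (0,∞) be C¹ with c' > 0 on (0,∞) and x ↦ c(x)/c'(x) concave on (0,∞), and set u(0,x) := ∫₀ˣ c(y) dy for x > 0. Then there exists κ₁ > 0 such that every nonnegative measurable function f on ℝ^d with u(0, f) ∈ L¹(γ_d) satisfies f ∈ L^{1+1/κ₁}(γ_d); in particular f ∈ L¹(γ_d). -/
/-!
With `g = c / c'`, a nonnegative concave function on `(0, ∞)` grows at most linearly, so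
`g x ≤ κ x` for `x ≥ 1`. Equivalently `(log c)' ≥ 1 / (κ x)`, whence `c x ≥ c 1 * x ^ (1/κ)`.
Integrating, `u(0, t) = ∫₀ᵗ c ≥ c 1 * (t ^ (1 + 1/κ) - 1) / (1 + 1/κ)`, so
`|f| ^ (1 + 1/κ) ≤ 1 + K u(0, f)` pointwise, and the right-hand side is integrable against the
probability measure `γ_d`. Integrability of `f` follows since `1 + 1/κ ≥ 1`.
-/

open MeasureTheory Real Set

theorem ConcaveOn.le_two_mul_mul_of_one_le {g : ℝ → ℝ} (hg : ConcaveOn ℝ (Ioi 0) g)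
    (hg_nonneg : ∀ x > 0, 0 ≤ g x) {t : ℝ} (ht : 1 ≤ t) : g t ≤ 2 * g 1 * t := by
  have hg1 := hg_nonneg 1 one_pos
  rcases ht.eq_or_lt with rfl | ht
  · linarith
  have hslope := hg.slope_anti_adjacent (x := 1 / 2) (by norm_num) (by simp; linarith)
    (by norm_num) ht
  have hhalf := hg_nonneg (1 / 2) (by norm_num)
  rw [div_le_iff₀ (by linarith)] at hslope
  norm_num at hslope
  nlinarith

theorem mul_rpow_le_of_le_mul_deriv {c : ℝ → ℝ} {A : ℝ} (hA : 0 < A)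
    (hc_pos : ∀ x ≥ 1, 0 < c x) (hc_diff : ∀ x ≥ 1, DifferentiableAt ℝ c x)
    (hc_growth : ∀ x ≥ 1, c x ≤ A * x * deriv c x) {t : ℝ} (ht : 1 ≤ t) :
    c 1 * t ^ (1 / A) ≤ c t := by
  have hderiv : ∀ x ≥ 1,
      HasDerivAt (fun x => log (c x) - 1 / A * log x) (deriv c x / c x - 1 / A * x⁻¹) x :=
    fun x hx => ((hc_diff x hx).hasDerivAt.log (hc_pos x hx).ne').sub
      ((hasDerivAt_log (by positivity)).const_mul _)
  have hmono : MonotoneOn (fun x => log (c x) - 1 / A * log x) (Ici 1) := by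
    refine monotoneOn_of_deriv_nonneg (convex_Ici 1)
      (fun x hx => (hderiv x hx).continuousAt.continuousWithinAt) ?_ ?_
    · rw [interior_Ici]
      exact fun x hx => (hderiv x (le_of_lt hx)).differentiableAt.differentiableWithinAt
    · rw [interior_Ici]
      intro x (hx : 1 < x)
      rw [(hderiv x hx.le).deriv, sub_nonneg, ← div_eq_mul_inv, div_div,
        div_le_div_iff₀ (by positivity) (hc_pos x hx.le)]
      linarith [hc_growth x hx.le]
  have hlog := hmono self_mem_Ici ht ht
  simp only [log_one, mul_zero, sub_zero] at hlog
  have ht0 : 0 < t := by linarith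
  rw [← log_le_log_iff (by have := hc_pos 1 le_rfl; positivity) (hc_pos t ht),
    log_mul (hc_pos 1 le_rfl).ne' (rpow_pos_of_pos ht0 _).ne', log_rpow ht0]
  linarith

theorem MonotoneOn.integrableOn_Ioo_zero {c : ℝ → ℝ} (hc : MonotoneOn c (Ioi 0))
    (hc_nonneg : ∀ x > 0, 0 ≤ c x) (t : ℝ) : IntegrableOn c (Ioo 0 t) := by
  refine Integrable.mono' (g := fun _ => c t) (integrableOn_const measure_Ioo_lt_top.ne)
    (aemeasurable_restrict_of_monotoneOn measurableSet_Ioo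
      (hc.mono Ioo_subset_Ioi_self)).aestronglyMeasurable ?_
  refine (ae_restrict_iff' measurableSet_Ioo).2 (ae_of_all _ fun y hy => ?_)
  rw [norm_of_nonneg (hc_nonneg y hy.1)]
  exact hc hy.1 (hy.1.trans hy.2) hy.2.le

theorem rpow_le_one_add_mul_setIntegral {c : ℝ → ℝ} {A t : ℝ} (hA : 0 < A) (hc1 : 0 < c 1)
    (hc_nonneg : ∀ x > 0, 0 ≤ c x) (hc_int : IntegrableOn c (Ioo 0 t))
    (hc_lower : ∀ x ≥ 1, c 1 * x ^ (1 / A) ≤ c x) (ht : 0 ≤ t) :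
    t ^ (1 + 1 / A) ≤ 1 + (1 + 1 / A) / c 1 * ∫ y in Ioo 0 t, c y := by
  have hp : 0 < 1 + 1 / A := by positivity
  have hint_nonneg : 0 ≤ ∫ y in Ioo 0 t, c y :=
    setIntegral_nonneg measurableSet_Ioo fun y hy => hc_nonneg y hy.1
  rcases le_or_gt t 1 with ht1 | ht1
  · have := rpow_le_one ht ht1 hp.le
    have : 0 ≤ (1 + 1 / A) / c 1 * ∫ y in Ioo 0 t, c y := by positivity
    linarith
  have hpower :
      ∫ y in Ioo 1 t, c 1 * y ^ (1 / A) = c 1 * ((t ^ (1 + 1 / A) - 1) / (1 + 1 / A)) := by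
    rw [integral_const_mul, ← integral_Ioc_eq_integral_Ioo,
      ← intervalIntegral.integral_of_le ht1.le,
      integral_rpow (Or.inl (by linarith [one_div_pos.2 hA])), one_rpow, add_comm (1 / A)]
  have hle : c 1 * ((t ^ (1 + 1 / A) - 1) / (1 + 1 / A)) ≤ ∫ y in Ioo 0 t, c y := calc
    _ = ∫ y in Ioo 1 t, c 1 * y ^ (1 / A) := hpower.symm
    _ ≤ ∫ y in Ioo 1 t, c y := by
      refine setIntegral_mono_on ?_ (hc_int.mono_set (Ioo_subset_Ioo_left zero_le_one))
        measurableSet_Ioo fun y hy => hc_lower y hy.1.le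
      exact (ContinuousOn.integrableOn_Icc (by fun_prop (disch := intros; positivity))).mono_set
        Ioo_subset_Icc_self
    _ ≤ ∫ y in Ioo 0 t, c y :=
      setIntegral_mono_set hc_int
        ((ae_restrict_iff' measurableSet_Ioo).2 (ae_of_all _ fun y hy => hc_nonneg y hy.1))
        (Ioo_subset_Ioo_left zero_le_one).eventuallyLE
  rw [mul_div_assoc', div_le_iff₀ hp] at hle
  rw [div_mul_eq_mul_div, ← sub_le_iff_le_add', le_div_iff₀ hc1]
  linarith

theorem exists_rpow_le_one_add_mul_setIntegral {c : ℝ → ℝ}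
    (hc_pos : ∀ x > 0, 0 < c x) (hc_smooth : ContDiffOn ℝ 1 c (Ioi 0))
    (hc_deriv_pos : ∀ x > 0, 0 < deriv c x)
    (hc_concave : ConcaveOn ℝ (Ioi 0) (fun x => c x / deriv c x)) :
    ∃ κ > (0 : ℝ), ∃ K, ∀ t ≥ (0 : ℝ), t ^ (1 + 1 / κ) ≤ 1 + K * ∫ y in Ioo 0 t, c y := by
  have hc1 := hc_pos 1 one_pos
  set κ := 2 * (c 1 / deriv c 1)
  have hκ : 0 < κ := by have := hc_deriv_pos 1 one_pos; positivity
  have hdiff (x : ℝ) (hx : x > 0) : DifferentiableAt ℝ c x :=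
    (hc_smooth.differentiableOn one_ne_zero x hx).differentiableAt (Ioi_mem_nhds hx)
  have hgrowth (x : ℝ) (hx : x ≥ 1) : c x ≤ κ * x * deriv c x := by
    have hx0 : 0 < x := by linarith
    rw [← div_le_iff₀ (hc_deriv_pos x hx0)]
    exact hc_concave.le_two_mul_mul_of_one_le
      (fun y hy => (div_pos (hc_pos y hy) (hc_deriv_pos y hy)).le) hx
  have hmono : MonotoneOn c (Ioi 0) :=
    monotoneOn_of_deriv_nonneg (convex_Ioi 0) hc_smooth.continuousOn
      (fun x hx => (hdiff x (interior_subset hx)).differentiableWithinAt)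
      (fun x hx => (hc_deriv_pos x (interior_subset hx)).le)
  refine ⟨κ, hκ, (1 + 1 / κ) / c 1, fun t ht => ?_⟩
  exact rpow_le_one_add_mul_setIntegral hκ hc1 (fun x hx => (hc_pos x hx).le)
    (hmono.integrableOn_Ioo_zero (fun x hx => (hc_pos x hx).le) t)
    (fun x hx => mul_rpow_le_of_le_mul_deriv hκ (fun y hy => hc_pos y (by linarith))
      (fun y hy => hdiff y (by linarith)) hgrowth hx) ht

noncomputable def stdGaussian (d : ℕ) : Measure (Fin d → ℝ) :=
  Measure.pi fun _ => ProbabilityTheory.gaussianReal 0 1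

theorem integrability_from_condition_C_general (d : ℕ) (c : ℝ → ℝ)
    (hc_pos : ∀ x > 0, 0 < c x)
    (hc_smooth : ContDiffOn ℝ 1 c (Set.Ioi 0))
    (hc_deriv_pos : ∀ x > 0, 0 < deriv c x)
    (hc_concave : ConcaveOn ℝ (Set.Ioi 0) (fun x => c x / deriv c x)) :
    ∃ κ₁ > (0 : ℝ), ∀ f : (Fin d → ℝ) → ℝ, Measurable f → (∀ x, 0 ≤ f x) →
      Integrable (fun x => ∫ y in Set.Ioo 0 (f x), c y) (stdGaussian d) →
      Integrable (fun x => |f x| ^ ((1 : ℝ) + 1 / κ₁)) (stdGaussian d) ∧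
        Integrable f (stdGaussian d) := by
  obtain ⟨κ, hκ, K, hbound⟩ :=
    exists_rpow_le_one_add_mul_setIntegral hc_pos hc_smooth hc_deriv_pos hc_concave
  have : IsProbabilityMeasure (stdGaussian d) := by unfold stdGaussian; infer_instance
  refine ⟨κ, hκ, fun f hf hf0 hu => ?_⟩
  have hp : 1 ≤ 1 + 1 / κ := le_add_of_nonneg_right (by positivity)
  have hLp : Integrable (fun x => |f x| ^ (1 + 1 / κ)) (stdGaussian d) := by
    refine ((integrable_const 1).add (hu.const_mul K)).mono'
      (by fun_prop (disch := linarith)) (ae_of_all _ fun x => ?_)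
    rw [abs_of_nonneg (hf0 x), norm_of_nonneg (rpow_nonneg (hf0 x) _)]
    exact hbound (f x) (hf0 x)
  refine ⟨hLp, ?_⟩
  have hL1 := integrable_norm_rpow_of_le (p := 1) hf.aestronglyMeasurable zero_le_one
    (by linarith) hp (by simpa only [norm_eq_abs] using hLp)
  simpa only [rpow_one, integrable_norm_iff hf.aestronglyMeasurable] using hL1

/-- Remark 1.3(1): integrability consequence of condition (C). If `c' > 0` and `c/c'`
is concave on `(0,∞)`, and `u(0,x) = ∫₀ˣ c(y) dy`, then there is `κ₁ > 0` such that
every nonnegative measurable `f` with `u(0,f) ∈ L¹(γ_d)` lies in `L^{1+1/κ₁}(γ_d)`,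
in particular in `L¹(γ_d)`. -/
theorem integrability_from_condition_C (d : ℕ) (hd : 0 < d) (c : ℝ → ℝ)
    (hc_pos : ∀ x > 0, 0 < c x)
    (hc_smooth : ContDiffOn ℝ 1 c (Set.Ioi 0))
    (hc_deriv_pos : ∀ x > 0, 0 < deriv c x)
    (hc_concave : ConcaveOn ℝ (Set.Ioi 0) (fun x => c x / deriv c x)) :
    ∃ κ₁ > (0 : ℝ), ∀ f : (Fin d → ℝ) → ℝ, Measurable f → (∀ x, 0 ≤ f x) →
      Integrable (fun x => ∫ y in Set.Ioo 0 (f x), c y) (stdGaussian d) →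
      Integrable (fun x => |f x| ^ ((1 : ℝ) + 1 / κ₁)) (stdGaussian d) ∧
        Integrable f (stdGaussian d) :=
  integrability_from_condition_C_general d c hc_pos hc_smooth hc_deriv_pos hc_concave
end

section
/- (Lemma 4.2: positivity and concavity of φ.) Let c : (0,∞) → (0,∞) be C¹ with c' > 0 on (0,∞) and x ↦ c(x)/c'(x) concave on (0,∞). For 0 < t ≤ 1 set u(t,x) := ∫₀ˣ c(y)^{1/t} dy for x > 0, let v(t,·) be the inverse function of x ↦ u(t,x) on (0,∞), and define φ(t,x) := t² · (c(v(t,x))/c'(v(t,x))) · c(v(t,x))^{1/t} for x > 0. Then for every 0 < t ≤ 1 the function x ↦ φ(t,x) is positive and concave on (0,∞). -/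
/-!
In the variable `w = v(t, x)` we have `φ = t² q(w) c(w)^{1/t}` with `q = c / c'` and
`dx = c(w)^{1/t} dw`, so formally `dφ/dx = t² q'(w) + t`, which is non-increasing since `q` is
concave and `v` increasing. To avoid differentiating `q`, for `x < y < z` replace `q` by its chord
`ℓ` (of slope `σ`) through `v y` and `v z`: then `t² ℓ c^{1/t} - (t² σ + t) u` has derivative
`t c^{1/t - 1} c' (ℓ - q)`, hence is maximal at `v y` on `[v x, v z]`. This says that the line of
slope `t² σ + t` through `(y, φ y)` lies above `φ` at `x` and `z`.
-/

open MeasureTheory Real Set Filter Topology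

theorem MonotoneOn.integrableOn_Ioc_of_nonneg {f : ℝ → ℝ} {a b : ℝ}
    (hf : MonotoneOn f (Ioc a b)) (hf₀ : ∀ x ∈ Ioc a b, 0 ≤ f x) :
    IntegrableOn f (Ioc a b) := by
  rcases le_or_gt b a with hba | hab
  · simp [Ioc_eq_empty_of_le hba]
  have hb : b ∈ Ioc a b := right_mem_Ioc.2 hab
  refine Integrable.mono' (g := fun _ => f b) (integrableOn_const measure_Ioc_lt_top.ne)
    (aemeasurable_restrict_of_monotoneOn measurableSet_Ioc hf).aestronglyMeasurable ?_
  refine (ae_restrict_iff' measurableSet_Ioc).2 (Eventually.of_forall fun x hx => ?_)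
  rw [norm_of_nonneg (hf₀ x hx)]
  exact hf hx hb hx.2

theorem hasDerivAt_integral_Ioo {f : ℝ → ℝ} {a x : ℝ} (hax : a < x)
    (hf : IntegrableOn f (Ioc a x)) (hmeas : StronglyMeasurableAtFilter f (𝓝 x))
    (hcont : ContinuousAt f x) :
    HasDerivAt (fun y => ∫ z in Ioo a y, f z) (f x) x := by
  have hint : IntervalIntegrable f volume a x :=
    (intervalIntegrable_iff_integrableOn_Ioc_of_le hax.le).2 hf
  refine (intervalIntegral.integral_hasDerivAt_right hint hmeas hcont).congr_of_eventuallyEq ?_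
  filter_upwards [Ioi_mem_nhds hax] with y hy
  rw [intervalIntegral.integral_of_le hy.le, integral_Ioc_eq_integral_Ioo]

theorem hasDerivAt_integral_Ioo_of_monotoneOn {f : ℝ → ℝ} {a x : ℝ} (hax : a < x)
    (hf : MonotoneOn f (Ioi a)) (hf_cont : ContinuousOn f (Ioi a)) (hf₀ : ∀ y > a, 0 ≤ f y) :
    HasDerivAt (fun y => ∫ z in Ioo a y, f z) (f x) x :=
  hasDerivAt_integral_Ioo hax
    ((hf.mono Ioc_subset_Ioi_self).integrableOn_Ioc_of_nonneg fun y hy => hf₀ y hy.1)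
    (hf_cont.stronglyMeasurableAtFilter isOpen_Ioi x hax) (hf_cont.continuousAt (Ioi_mem_nhds hax))

theorem strictMonoOn_of_rightInvOn {α β : Type*} [LinearOrder α] [Preorder β]
    {u : α → β} {v : β → α} {s : Set α} {t : Set β}
    (hu : MonotoneOn u s) (hv : RightInvOn v u t) (hvt : MapsTo v t s) : StrictMonoOn v t := by
  intro y hy z hz hyz
  by_contra! h
  have := hu (hvt hz) (hvt hy) h
  rw [hv hy, hv hz] at this
  exact this.not_gt hyz

theorem ConcaveOn.le_add_slope_mul {f : ℝ → ℝ} {s : Set ℝ} (hf : ConcaveOn ℝ s f) {a b x : ℝ}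
    (ha : a ∈ s) (hb : b ∈ s) (hx : x ∈ s) (hxa : x ≤ a) (hab : a < b) :
    f x ≤ f a + slope f a b * (x - a) := by
  rcases hxa.eq_or_lt with rfl | hxa
  · simp
  have := hf.slope_anti ha ⟨hx, hxa.ne⟩ ⟨hb, hab.ne'⟩ (hxa.trans hab).le
  rw [slope_def_field, slope_def_field, le_div_iff_of_neg (sub_neg.2 hxa)] at this
  rw [slope_def_field]
  linarith

theorem ConcaveOn.add_slope_mul_le {f : ℝ → ℝ} {s : Set ℝ} (hf : ConcaveOn ℝ s f) {a b x : ℝ}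
    (ha : a ∈ s) (hb : b ∈ s) (hx : x ∈ s) (hax : a ≤ x) (hxb : x ≤ b) :
    f a + slope f a b * (x - a) ≤ f x := by
  rcases hax.eq_or_lt with rfl | hax
  · simp
  have := hf.slope_anti ha ⟨hx, hax.ne'⟩ ⟨hb, (hax.trans_le hxb).ne'⟩ hxb
  rw [slope_def_field, slope_def_field, le_div_iff₀ (sub_pos.2 hax)] at this
  rw [slope_def_field]
  linarith

theorem concaveOn_of_exists_slope {f : ℝ → ℝ} {s : Set ℝ} (hs : Convex ℝ s)
    (h : ∀ x ∈ s, ∀ z ∈ s, ∀ y, x < y → y < z →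
      ∃ K, f x ≤ f y + K * (x - y) ∧ f z ≤ f y + K * (z - y)) :
    ConcaveOn ℝ s f := by
  refine concaveOn_of_slope_anti_adjacent hs fun {x y z} hx hz hxy hyz => ?_
  obtain ⟨K, hKx, hKz⟩ := h x hx z hz y hxy hyz
  calc (f z - f y) / (z - y) ≤ K := by rw [div_le_iff₀ (sub_pos.2 hyz)]; linarith
    _ ≤ (f y - f x) / (y - x) := by rw [le_div_iff₀ (sub_pos.2 hxy)]; linarith

/-- `φ(t, u(t, w))`, i.e. `φ(t, ·)` in the variable `w = v(t, x)`. -/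
noncomputable def phiAlong (c c' : ℝ → ℝ) (t w : ℝ) : ℝ := t ^ 2 * (c w / c' w) * c w ^ (1 / t)

section Reparametrized

variable {c c' u : ℝ → ℝ} {t : ℝ}

theorem hasDerivAt_affine_mul_rpow_sub (ht : t ≠ 0) {a σ w : ℝ} (hcw : 0 < c w)
    (hc : HasDerivAt c (c' w) w) (hu : HasDerivAt u (c w ^ (1 / t)) w) :
    HasDerivAt (fun w => t ^ 2 * (a + σ * w) * c w ^ (1 / t) - (t ^ 2 * σ + t) * u w)
      (t * c w ^ (1 / t - 1) * ((a + σ * w) * c' w - c w)) w := by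
  have hℓ : HasDerivAt (fun w => t ^ 2 * (a + σ * w)) (t ^ 2 * σ) w := by
    simpa using ((hasDerivAt_id w).const_mul σ).const_add a |>.const_mul (t ^ 2)
  refine ((hℓ.mul (hc.rpow_const (p := 1 / t) (Or.inl hcw.ne'))).sub
    (hu.const_mul _)).congr_deriv ?_
  rw [rpow_sub_one hcw.ne']
  field_simp
  ring

variable (hc : ∀ w > 0, HasDerivAt c (c' w) w) (hc_pos : ∀ w > 0, 0 < c w)
  (hc'_pos : ∀ w > 0, 0 < c' w) (hq : ConcaveOn ℝ (Ioi 0) fun w => c w / c' w)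
  (ht : 0 < t) (hu : ∀ w > 0, HasDerivAt u (c w ^ (1 / t)) w)
include hc hc_pos hc'_pos hq ht hu

theorem exists_supporting_slope {w₁ w₂ w₃ : ℝ} (h₁ : 0 < w₁) (h₁₂ : w₁ < w₂) (h₂₃ : w₂ < w₃) :
    ∃ K, phiAlong c c' t w₁ ≤ phiAlong c c' t w₂ + K * (u w₁ - u w₂) ∧
      phiAlong c c' t w₃ ≤ phiAlong c c' t w₂ + K * (u w₃ - u w₂) := by
  set q : ℝ → ℝ := fun w => c w / c' w
  set σ := slope q w₂ w₃
  set a := q w₂ - σ * w₂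
  set Ψ : ℝ → ℝ := fun w => t ^ 2 * (a + σ * w) * c w ^ (1 / t) - (t ^ 2 * σ + t) * u w
  have h₂ : 0 < w₂ := h₁.trans h₁₂
  have h₃ : 0 < w₃ := h₂.trans h₂₃
  -- `a + σ w` is the chord of `q` through `w₂` and `w₃`; `Ψ` increases where it lies above `q`
  -- and decreases where it lies below.
  set Ψ' : ℝ → ℝ := fun w => t * c w ^ (1 / t - 1) * ((a + σ * w) * c' w - c w)
  have hΨ' (w : ℝ) (hw : 0 < w) : HasDerivAt Ψ (Ψ' w) w :=
    hasDerivAt_affine_mul_rpow_sub ht.ne' (hc_pos w hw) (hc w hw) (hu w hw)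
  have hsign {w : ℝ} (hw : 0 < w) :
      Ψ' w = t * c w ^ (1 / t - 1) * c' w * (a + σ * w - q w) := by
    simp only [Ψ', q]
    field_simp [(hc'_pos w hw).ne']
  have hfactor {w : ℝ} (hw : 0 < w) : 0 ≤ t * c w ^ (1 / t - 1) * c' w :=
    (mul_pos (mul_pos ht (rpow_pos_of_pos (hc_pos w hw) _)) (hc'_pos w hw)).le
  have hcont (I : Set ℝ) (hI : I ⊆ Ioi 0) : ContinuousOn Ψ I := fun w hw =>
    (hΨ' w (hI hw)).continuousAt.continuousWithinAt
  have hmono : MonotoneOn Ψ (Icc w₁ w₂) := by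
    refine monotoneOn_of_hasDerivWithinAt_nonneg (convex_Icc _ _) (f' := Ψ')
      (hcont _ fun w hw => h₁.trans_le hw.1) (fun w hw => ?_) fun w hw => ?_ <;>
      rw [interior_Icc] at hw <;> have hw₀ : 0 < w := h₁.trans hw.1
    · exact (hΨ' w hw₀).hasDerivWithinAt
    · rw [hsign hw₀]
      refine mul_nonneg (hfactor hw₀) (sub_nonneg.2 ?_)
      have := hq.le_add_slope_mul h₂ h₃ hw₀ hw.2.le h₂₃
      linarith
  have hanti : AntitoneOn Ψ (Icc w₂ w₃) := by
    refine antitoneOn_of_hasDerivWithinAt_nonpos (convex_Icc _ _) (f' := Ψ')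
      (hcont _ fun w hw => h₂.trans_le hw.1) (fun w hw => ?_) fun w hw => ?_ <;>
      rw [interior_Icc] at hw <;> have hw₀ : 0 < w := h₂.trans hw.1
    · exact (hΨ' w hw₀).hasDerivWithinAt
    · rw [hsign hw₀]
      refine mul_nonpos_of_nonneg_of_nonpos (hfactor hw₀) (sub_nonpos.2 ?_)
      have := hq.add_slope_mul_le h₂ h₃ hw₀ hw.1.le hw.2.le
      linarith
  have hφ₁ : phiAlong c c' t w₁ ≤ t ^ 2 * (a + σ * w₁) * c w₁ ^ (1 / t) := by
    have := hq.le_add_slope_mul h₂ h₃ h₁ h₁₂.le h₂₃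
    unfold phiAlong
    gcongr
    · exact (rpow_pos_of_pos (hc_pos w₁ h₁) _).le
    · exact this.trans_eq (by ring)
  have hφ₂ : phiAlong c c' t w₂ = t ^ 2 * (a + σ * w₂) * c w₂ ^ (1 / t) := by
    simp only [phiAlong, a, q]
    ring
  have hφ₃ : phiAlong c c' t w₃ = t ^ 2 * (a + σ * w₃) * c w₃ ^ (1 / t) := by
    have := sub_smul_slope q w₂ w₃
    simp only [smul_eq_mul, vsub_eq_sub] at this
    simp only [phiAlong, a, q] at this ⊢
    congr 2
    linarith
  have hΨ₁₂ := hmono (left_mem_Icc.2 h₁₂.le) (right_mem_Icc.2 h₁₂.le) h₁₂.le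
  have hΨ₃₂ := hanti (left_mem_Icc.2 h₂₃.le) (right_mem_Icc.2 h₂₃.le) h₂₃.le
  simp only [Ψ] at hΨ₁₂ hΨ₃₂
  exact ⟨t ^ 2 * σ + t, by linarith, by linarith⟩

end Reparametrized

theorem phi_pos_concave_general (c : ℝ → ℝ)
    (hc_pos : ∀ x > 0, 0 < c x)
    (hc_smooth : ContDiffOn ℝ 1 c (Set.Ioi 0))
    (hc_deriv_pos : ∀ x > 0, 0 < deriv c x)
    (hc_concave : ConcaveOn ℝ (Set.Ioi 0) (fun x => c x / deriv c x))
    (t : ℝ) (ht0 : 0 < t)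
    (u : ℝ → ℝ) (hu : ∀ x, u x = ∫ y in Set.Ioo 0 x, c y ^ (1 / t))
    (v : ℝ → ℝ) (hv : Set.InvOn v u (Set.Ioi 0) (Set.Ioi 0)) :
    (∀ x > 0, 0 < t ^ 2 * (c (v x) / deriv c (v x)) * c (v x) ^ (1 / t)) ∧
    ConcaveOn ℝ (Set.Ioi 0)
      (fun x => t ^ 2 * (c (v x) / deriv c (v x)) * c (v x) ^ (1 / t)) := by
  have hc (w : ℝ) (hw : 0 < w) : HasDerivAt c (deriv c w) w :=
    ((hc_smooth.differentiableOn one_ne_zero w hw).differentiableAt (Ioi_mem_nhds hw)).hasDerivAt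
  have hc_mono : MonotoneOn c (Ioi 0) :=
    monotoneOn_of_hasDerivWithinAt_nonneg (convex_Ioi 0) hc_smooth.continuousOn
      (fun w hw => (hc w (interior_subset hw)).hasDerivWithinAt)
      fun w hw => (hc_deriv_pos w (interior_subset hw)).le
  have hf_mono : MonotoneOn (fun y => c y ^ (1 / t)) (Ioi 0) := fun x hx y _ hxy =>
    rpow_le_rpow (hc_pos x hx).le (hc_mono hx ‹_› hxy) (by positivity)
  have hf_cont : ContinuousOn (fun y => c y ^ (1 / t)) (Ioi 0) :=
    hc_smooth.continuousOn.rpow_const fun x hx => Or.inl (hc_pos x hx).ne'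
  have hu' (w : ℝ) (hw : 0 < w) : HasDerivAt u (c w ^ (1 / t)) w := by
    rw [funext hu]
    exact hasDerivAt_integral_Ioo_of_monotoneOn hw hf_mono hf_cont
      fun y hy => (rpow_pos_of_pos (hc_pos y hy) _).le
  have hu_mono : MonotoneOn u (Ioi 0) :=
    monotoneOn_of_hasDerivWithinAt_nonneg (convex_Ioi 0)
      (fun w hw => (hu' w hw).continuousAt.continuousWithinAt)
      (fun w hw => (hu' w (interior_subset hw)).hasDerivWithinAt)
      fun w hw => (rpow_pos_of_pos (hc_pos w (interior_subset hw)) _).le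
  -- `u` vanishes on `(-∞, 0]`, so `v` cannot take values there.
  have hv_pos : MapsTo v (Ioi 0) (Ioi 0) := fun y hy => by
    rw [mem_Ioi]
    by_contra! h
    have := hv.2 hy
    rw [hu, Ioo_eq_empty (not_lt.2 h), Measure.restrict_empty, integral_zero_measure] at this
    exact hy.ne this
  have hv_mono := strictMonoOn_of_rightInvOn hu_mono hv.2 hv_pos
  refine ⟨fun x hx => ?_, concaveOn_of_exists_slope (convex_Ioi 0) fun x hx z hz y hxy hyz => ?_⟩
  · have hvx := hv_pos hx
    exact mul_pos (mul_pos (pow_pos ht0 2) (div_pos (hc_pos _ hvx) (hc_deriv_pos _ hvx)))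
      (rpow_pos_of_pos (hc_pos _ hvx) _)
  · have hy : y ∈ Ioi 0 := lt_trans hx hxy
    have := exists_supporting_slope hc hc_pos hc_deriv_pos hc_concave ht0 hu' (hv_pos hx)
      (hv_mono hx hy hxy) (hv_mono hy hz hyz)
    rwa [hv.2 hx, hv.2 hy, hv.2 hz] at this

/-- Lemma 4.2: positivity and concavity of `φ(t,·)`. Under condition (C) on `c`, for
`0 < t ≤ 1`, with `u(t,x) = ∫₀ˣ c(y)^{1/t} dy`, `v(t,·)` its inverse, and
`φ(t,x) = t² (c(v(t,x))/c'(v(t,x))) c(v(t,x))^{1/t}`, the function `x ↦ φ(t,x)`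
is positive and concave on `(0,∞)`. -/
theorem phi_pos_concave (c : ℝ → ℝ)
    (hc_pos : ∀ x > 0, 0 < c x)
    (hc_smooth : ContDiffOn ℝ 1 c (Set.Ioi 0))
    (hc_deriv_pos : ∀ x > 0, 0 < deriv c x)
    (hc_concave : ConcaveOn ℝ (Set.Ioi 0) (fun x => c x / deriv c x))
    (t : ℝ) (ht0 : 0 < t) (ht1 : t ≤ 1)
    (u : ℝ → ℝ) (hu : ∀ x, u x = ∫ y in Set.Ioo 0 x, c y ^ (1 / t))
    (v : ℝ → ℝ) (hv : Set.InvOn v u (Set.Ioi 0) (Set.Ioi 0)) :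
    (∀ x > 0, 0 < t ^ 2 * (c (v x) / deriv c (v x)) * c (v x) ^ (1 / t)) ∧
    ConcaveOn ℝ (Set.Ioi 0)
      (fun x => t ^ 2 * (c (v x) / deriv c (v x)) * c (v x) ^ (1 / t)) :=
  phi_pos_concave_general c hc_pos hc_smooth hc_deriv_pos hc_concave t ht0 u hu v hv
end

section
/- (Example 4.5(2), verification of condition (C).) Let α, β > 0, set ρ := β/α, and let a be a constant with a ≥ e^{2+ρ}. Define c(x) := (x+a)^α / (log(x+a))^β for x > 0. Then c is C¹ on (0,∞), c'(x) = α (x+a)^{α−1} (log(x+a) − ρ) / (log(x+a))^{β+1} > 0 for all x > 0, and the function x ↦ c(x)/c'(x) = (x+a)/α + (ρ/α)·(x+a)/(log(x+a) − ρ) is concave on (0,∞). -/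
open Real Set

/-! With `t = x + a` and `L = log t`, the quotient rule gives `c' = t ^ (α - 1) (α L - β) / L ^ (β + 1)`,
so `c / c' = t L / (α (L - ρ))`. The function `t ↦ t / (log t - ρ)` has second derivative
`(2 - (L - ρ)) / (t (L - ρ) ^ 3)`, so it is concave exactly where `L - ρ ≥ 2`, i.e. for
`t ≥ e ^ (2 + ρ)`; the condition `a ≥ e ^ (2 + ρ)` puts all of `x > 0` in that range. -/

theorem hasDerivAt_rpow_div_log_rpow (α β : ℝ) {t : ℝ} (ht : 1 < t) :
    HasDerivAt (fun t => t ^ α / log t ^ β)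
      (t ^ (α - 1) * (α * log t - β) / log t ^ (β + 1)) t := by
  have ht₀ : t ≠ 0 := (zero_lt_one.trans ht).ne'
  have hL : 0 < log t := log_pos ht
  have hnum := (hasDerivAt_id t).rpow_const (p := α) (Or.inl ht₀)
  have hden := (hasDerivAt_log ht₀).rpow_const (p := β) (Or.inl hL.ne')
  refine (hnum.div hden (rpow_pos_of_pos hL β).ne').congr_deriv ?_
  simp only [id]
  rw [rpow_sub_one ht₀, rpow_sub_one hL.ne', rpow_add_one hL.ne']
  have := (rpow_pos_of_pos hL β).ne'
  field_simp

theorem rpow_div_log_rpow_div_deriv {α β ρ t : ℝ} (hα : α ≠ 0) (ht : 1 < t) (hLρ : log t - ρ ≠ 0) :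
    t ^ α / log t ^ β / (α * t ^ (α - 1) * (log t - ρ) / log t ^ (β + 1)) =
      t / α + ρ / α * (t / (log t - ρ)) := by
  have ht₀ : 0 < t := zero_lt_one.trans ht
  have hL : 0 < log t := log_pos ht
  rw [rpow_sub_one ht₀.ne', rpow_add_one hL.ne']
  have := (rpow_pos_of_pos ht₀ α).ne'
  have := (rpow_pos_of_pos hL β).ne'
  field_simp
  ring

theorem contDiffOn_rpow_div_log_rpow (α β : ℝ) {n : WithTop ℕ∞} :
    ContDiffOn ℝ n (fun t => t ^ α / log t ^ β) (Ioi 1) := by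
  intro t ht
  have ht₀ : t ≠ 0 := (zero_lt_one.trans ht).ne'
  have hL : 0 < log t := log_pos ht
  refine ContDiffAt.contDiffWithinAt ?_
  exact (contDiffAt_id.rpow_const_of_ne ht₀).div
    ((contDiffAt_log.2 ht₀).rpow_const_of_ne hL.ne') (rpow_pos_of_pos hL β).ne'

theorem hasDerivAt_div_log_sub (ρ : ℝ) {t : ℝ} (ht : t ≠ 0) (hL : log t - ρ ≠ 0) :
    HasDerivAt (fun t => t / (log t - ρ)) ((log t - ρ - 1) / (log t - ρ) ^ 2) t := by
  refine ((hasDerivAt_id t).div ((hasDerivAt_log ht).sub_const ρ) hL).congr_deriv ?_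
  simp only [id]
  field_simp

theorem hasDerivAt_deriv_div_log_sub (ρ : ℝ) {t : ℝ} (ht : t ≠ 0) (hL : log t - ρ ≠ 0) :
    HasDerivAt (fun t => (log t - ρ - 1) / (log t - ρ) ^ 2)
      ((2 - (log t - ρ)) / (t * (log t - ρ) ^ 3)) t := by
  have hD := (hasDerivAt_log ht).sub_const ρ
  refine ((hD.sub_const 1).div (hD.fun_pow 2) (pow_ne_zero 2 hL)).congr_deriv ?_
  field_simp
  ring

theorem concaveOn_div_log_sub (ρ : ℝ) :
    ConcaveOn ℝ (Ici (exp (2 + ρ))) (fun t => t / (log t - ρ)) := by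
  have key : ∀ t ∈ Ici (exp (2 + ρ)), 0 < t ∧ 2 ≤ log t - ρ := fun t ht => by
    have ht₀ : 0 < t := (exp_pos _).trans_le ht
    exact ⟨ht₀, by linarith [(le_log_iff_exp_le ht₀).2 ht]⟩
  have hderiv : ∀ t ∈ Ici (exp (2 + ρ)), HasDerivAt (fun t => t / (log t - ρ))
      ((log t - ρ - 1) / (log t - ρ) ^ 2) t := fun t ht => by
    obtain ⟨ht₀, hL⟩ := key t ht
    exact hasDerivAt_div_log_sub ρ ht₀.ne' (by linarith)
  refine concaveOn_of_hasDerivWithinAt2_nonpos (f' := fun t => (log t - ρ - 1) / (log t - ρ) ^ 2)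
    (f'' := fun t => (2 - (log t - ρ)) / (t * (log t - ρ) ^ 3)) (convex_Ici _)
    (fun t ht => (hderiv t ht).continuousAt.continuousWithinAt) ?_ ?_ ?_
  · rw [interior_Ici]
    exact fun t ht => (hderiv t (mem_Ici_of_Ioi ht)).hasDerivWithinAt
  · rw [interior_Ici]
    intro t ht
    obtain ⟨ht₀, hL⟩ := key t (mem_Ici_of_Ioi ht)
    exact (hasDerivAt_deriv_div_log_sub ρ ht₀.ne' (by linarith)).hasDerivWithinAt
  · rw [interior_Ici]
    intro t ht
    obtain ⟨ht₀, hL⟩ := key t (mem_Ici_of_Ioi ht)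
    exact div_nonpos_of_nonpos_of_nonneg (by linarith) (by positivity)

/-- Example 4.5(2): verification of condition (C) for
`c(x) = (x+a)^α / (log(x+a))^β` with `α, β > 0`, `ρ = β/α` and `a ≥ e^{2+ρ}`. -/
theorem example_power_log_condition_C (α β : ℝ) (hα : 0 < α) (hβ : 0 < β)
    (ρ : ℝ) (hρ : ρ = β / α)
    (a : ℝ) (ha : Real.exp (2 + ρ) ≤ a)
    (c : ℝ → ℝ) (hc : ∀ x, c x = (x + a) ^ α / Real.log (x + a) ^ β) :
    ContDiffOn ℝ 1 c (Set.Ioi 0) ∧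
    (∀ x > 0,
      deriv c x =
        α * (x + a) ^ (α - 1) * (Real.log (x + a) - ρ) / Real.log (x + a) ^ (β + 1) ∧
      0 < deriv c x) ∧
    (∀ x > 0,
      c x / deriv c x = (x + a) / α + (ρ / α) * ((x + a) / (Real.log (x + a) - ρ))) ∧
    ConcaveOn ℝ (Set.Ioi 0)
      (fun x => (x + a) / α + (ρ / α) * ((x + a) / (Real.log (x + a) - ρ))) := by
  have hρ₀ : 0 ≤ ρ := hρ ▸ (div_pos hβ hα).le
  have hshift : ∀ x > 0, exp (2 + ρ) ≤ x + a := fun x hx => by linarith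
  have hlog : ∀ x > 0, 1 < x + a ∧ 2 + ρ ≤ log (x + a) := fun x hx =>
    ⟨(one_lt_exp_iff.2 (by linarith)).trans_le (hshift x hx),
      (le_log_iff_exp_le ((exp_pos _).trans_le (hshift x hx))).2 (hshift x hx)⟩
  have hc' : c = fun x => (fun t => t ^ α / log t ^ β) (x + a) := funext hc
  have hderiv : ∀ x > 0, HasDerivAt c
      (α * (x + a) ^ (α - 1) * (log (x + a) - ρ) / log (x + a) ^ (β + 1)) x := fun x hx => by
    rw [hc']
    refine ((hasDerivAt_rpow_div_log_rpow α β (hlog x hx).1).comp_add_const x a).congr_deriv ?_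
    rw [hρ]
    field_simp
  refine ⟨?_, fun x hx => ⟨(hderiv x hx).deriv, ?_⟩, fun x hx => ?_, ?_⟩
  · rw [hc']
    exact (contDiffOn_rpow_div_log_rpow α β).comp (contDiff_id.add contDiff_const).contDiffOn
      fun x hx => (hlog x hx).1
  · obtain ⟨ht, hL⟩ := hlog x hx
    rw [(hderiv x hx).deriv]
    have : 0 < log (x + a) - ρ := by linarith
    have : 0 < log (x + a) := by linarith
    positivity
  · rw [hc x, (hderiv x hx).deriv]
    exact rpow_div_log_rpow_div_deriv hα.ne' (hlog x hx).1 (by linarith [(hlog x hx).2])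
  · have hlin := ((concaveOn_id (convex_Ioi (0 : ℝ))).add_const a).smul (inv_nonneg.2 hα.le)
    have hg := ((concaveOn_div_log_sub ρ).translate_left a).subset
      (fun x hx => by simpa [add_comm] using hshift x hx) (convex_Ioi 0)
    refine (hlin.add (hg.smul (div_nonneg hρ₀ hα.le))).congr fun x _ => ?_
    simp only [Pi.add_apply, Function.comp_apply, id, smul_eq_mul]
    ring
end
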